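/- arXiv:1201.6111 — 4 statements merged into one kernel-verified Lean document; each statement's English description precedes it below -/
import Mathlib

section
/- Let H and B be cochain complexes with linear maps ι : H → B, π : B → H and a degree -1 map h : B → B satisfying π∘ι = id_H and d∘h + h∘d = id_B − ι∘π, together with the side conditions h∘ι = 0, h∘h = 0, π∘h = 0. If B carries a unit element e for an associative product with ι(π(e)) = e, then any composite operation built from a rooted tree with at least one internal edge, whose vertex operations are the product, and which has e as one of its leaf inputs, vanishes (since the composite necessarily contains one of the compositions h∘h, h∘ι, or π∘h). -/
/-- Rooted trees whose leaves carry inputs from `H` and whose internal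
vertices are all decorated by the (associative, unital) product of `B`. -/
inductive PTree (H : Type*) where
  | leaf (x : H) : PTree H
  | node (l r : PTree H) : PTree H

namespace PTree

/-- `t.containsLeaf x` : `x` occurs as one of the leaf inputs of `t`. -/
def containsLeaf {H : Type*} : PTree H → H → Prop
  | leaf y, x => y = x
  | node l r, x => l.containsLeaf x ∨ r.containsLeaf x

def isNode {H : Type*} : PTree H → Prop
  | leaf _ => False
  | node _ _ => True

/-- Evaluation of a decorated tree inside `B`: leaves are decorated by `ι`,
internal edges by `h`, and vertices by the product of `B`. -/
noncomputable def evalB {H B : Type*} [AddCommGroup H] [Module ℂ H]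
    [Ring B] [Algebra ℂ B] (ι : H →ₗ[ℂ] B) (h : B →ₗ[ℂ] B) : PTree H → B
  | leaf x => ι x
  | node l r => h (evalB ι h l * evalB ι h r)

end PTree

/-!
A tree evaluation either is a single leaf `ι x` or ends with `h`. If one leaf carries a unit
`x` with `ι x = 1`, multiplying by it at its parent vertex leaves the sibling's value unchanged,
and `h` is then applied to a value of the form `ι y` or `h b`, which `h ∘ ι = 0` and `h ∘ h = 0`
kill; the zero then propagates to the root. At the root itself the sibling of the unit is an
internal subtree, so its value `h b` is killed by `π ∘ h = 0`.
-/

namespace PTree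

variable {H B : Type*} [AddCommGroup H] [Module ℂ H] [Ring B] [Algebra ℂ B]
  {ι : H →ₗ[ℂ] B} {h : B →ₗ[ℂ] B}

theorem apply_evalB_eq_zero (hhι : h ∘ₗ ι = 0) (hhh : h ∘ₗ h = 0) (t : PTree H) :
    h (evalB ι h t) = 0 := by
  cases t with
  | leaf x => exact LinearMap.congr_fun hhι x
  | node l r => exact LinearMap.congr_fun hhh _

theorem map_evalB_eq_zero_of_isNode {M : Type*} [AddCommGroup M] [Module ℂ M]
    {p : B →ₗ[ℂ] M} (hp : p ∘ₗ h = 0) {t : PTree H} (ht : t.isNode) :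
    p (evalB ι h t) = 0 := by
  cases t with
  | leaf x => exact ht.elim
  | node l r => exact LinearMap.congr_fun hp _

theorem eq_leaf_or_evalB_eq_zero (hhι : h ∘ₗ ι = 0) (hhh : h ∘ₗ h = 0) {x : H} (hx : ι x = 1)
    {t : PTree H} (ht : t.containsLeaf x) : t = leaf x ∨ evalB ι h t = 0 := by
  induction t with
  | leaf y => exact Or.inl (congrArg leaf ht)
  | node l r ihl ihr =>
    right
    rcases ht with hl | hr
    · rcases ihl hl with rfl | hl0
      · rw [evalB, evalB, hx, one_mul, apply_evalB_eq_zero hhι hhh]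
      · rw [evalB, hl0, zero_mul, map_zero]
    · rcases ihr hr with rfl | hr0
      · rw [evalB, evalB, hx, mul_one, apply_evalB_eq_zero hhι hhh]
      · rw [evalB, hr0, mul_zero, map_zero]

end PTree

theorem stmt0_general {H B : Type*} [AddCommGroup H] [Module ℂ H] [Ring B] [Algebra ℂ B]
    (ι : H →ₗ[ℂ] B) (π : B →ₗ[ℂ] H) (h : B →ₗ[ℂ] B)
    (hhι : h ∘ₗ ι = 0) (hhh : h ∘ₗ h = 0) (hπh : π ∘ₗ h = 0)
    (hπe : ι (π 1) = 1)
    (l r : PTree H) (hInternal : l.isNode ∨ r.isNode)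
    (hcont : (PTree.node l r).containsLeaf (π 1)) :
    π (PTree.evalB ι h l * PTree.evalB ι h r) = 0 := by
  rcases hcont with hl | hr
  · rcases PTree.eq_leaf_or_evalB_eq_zero hhι hhh hπe hl with rfl | hl0
    · have hrNode : r.isNode := hInternal.resolve_left id
      rw [PTree.evalB, hπe, one_mul, PTree.map_evalB_eq_zero_of_isNode hπh hrNode]
    · rw [hl0, zero_mul, map_zero]
  · rcases PTree.eq_leaf_or_evalB_eq_zero hhι hhh hπe hr with rfl | hr0
    · have hlNode : l.isNode := hInternal.resolve_right id
      rw [PTree.evalB, hπe, mul_one, PTree.map_evalB_eq_zero_of_isNode hπh hlNode]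
    · rw [hr0, mul_zero, map_zero]

/-- given linear transfer data `(ι, π, h)` between cochain complexes `H` and `B`
satisfying the side conditions, and a unit `e = 1` of the associative product of `B` with
`ι (π e) = e`, any composite operation built from a rooted tree with at least one internal edge,
all of whose vertices are decorated by the product, and which has `e` among its leaf inputs,
vanishes. -/
theorem stmt0 {H B : Type*} [AddCommGroup H] [Module ℂ H] [Ring B] [Algebra ℂ B]
    (dB : B →ₗ[ℂ] B) (dH : H →ₗ[ℂ] H)
    (ι : H →ₗ[ℂ] B) (π : B →ₗ[ℂ] H) (h : B →ₗ[ℂ] B)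
    (hdB : dB ∘ₗ dB = 0) (hdH : dH ∘ₗ dH = 0)
    (hchainι : dB ∘ₗ ι = ι ∘ₗ dH) (hchainπ : dH ∘ₗ π = π ∘ₗ dB)
    (hπι : π ∘ₗ ι = LinearMap.id)
    (hhomotopy : dB ∘ₗ h + h ∘ₗ dB = LinearMap.id - ι ∘ₗ π)
    (hhι : h ∘ₗ ι = 0) (hhh : h ∘ₗ h = 0) (hπh : π ∘ₗ h = 0)
    (hπe : ι (π 1) = 1)
    (l r : PTree H) (hInternal : l.isNode ∨ r.isNode)
    (hcont : (PTree.node l r).containsLeaf (π 1)) :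
    π (PTree.evalB ι h l * PTree.evalB ι h r) = 0 :=
  stmt0_general ι π h hhι hhh hπh hπe l r hInternal hcont
end

section
/- Let V be a complex inner product space with a self-adjoint operator Δ (the Laplacian), H = ker Δ, and let G be the Green's operator: G = 0 on H and G = Δ⁻¹ on the orthogonal complement of H. Let d, d* be adjoint operators with Δ = d d* + d* d, d² = 0, (d*)² = 0, and suppose d, d* commute with G. Define h = d* G, let ι : H → V be the inclusion and π : V → H the orthogonal projection. Then π∘ι = id_H, d∘h + h∘d = id_V − ι∘π, h∘ι = 0, h∘h = 0, and π∘h = 0. -/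
/-!
Harmonic elements are `d`-closed because `re ⟪Δx, x⟫ = ‖d* x‖² + ‖d x‖²`, so the image of `d*`
is orthogonal to `ker Δ` and is killed by `π`. Since `G` commutes with `d`,
`d h + h d = (d d* + d* d) G = Δ G`, and `Δ G = id - π` because `G` vanishes on `π x` and
inverts `Δ` on `x - π x`. Finally `h² = d* d* G² = 0` because `G` commutes with `d*`.
-/

open LinearMap

section Laplacian

variable {𝕜 V : Type*} [RCLike 𝕜] [NormedAddCommGroup V] [InnerProductSpace 𝕜 V]
  [FiniteDimensional 𝕜 V]

theorem re_inner_laplacian_apply_self (d : V →ₗ[𝕜] V) (x : V) :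
    RCLike.re (inner 𝕜 ((d ∘ₗ adjoint d + adjoint d ∘ₗ d) x) x) =
      ‖adjoint d x‖ ^ 2 + ‖d x‖ ^ 2 := by
  rw [LinearMap.add_apply, inner_add_left, map_add, comp_apply, comp_apply, adjoint_inner_left,
    ← adjoint_inner_right d, ← inner_self_eq_norm_sq (𝕜 := 𝕜), ← inner_self_eq_norm_sq (𝕜 := 𝕜)]

theorem apply_eq_zero_of_mem_ker_laplacian (d : V →ₗ[𝕜] V) {x : V}
    (hx : x ∈ ker (d ∘ₗ adjoint d + adjoint d ∘ₗ d)) : d x = 0 ∧ adjoint d x = 0 := by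
  have hsum := re_inner_laplacian_apply_self d x
  rw [mem_ker.mp hx, inner_zero_left, map_zero] at hsum
  obtain ⟨hdstar, hd⟩ := (add_eq_zero_iff_of_nonneg (by positivity) (by positivity)).mp hsum.symm
  exact ⟨norm_eq_zero.mp (pow_eq_zero_iff two_ne_zero |>.mp hd),
    norm_eq_zero.mp (pow_eq_zero_iff two_ne_zero |>.mp hdstar)⟩

theorem adjoint_apply_mem_orthogonal_ker_laplacian (d : V →ₗ[𝕜] V) (x : V) :
    adjoint d x ∈ (ker (d ∘ₗ adjoint d + adjoint d ∘ₗ d))ᗮ := fun y hy => by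
  rw [adjoint_inner_right, (apply_eq_zero_of_mem_ker_laplacian d hy).1, inner_zero_left]

end Laplacian

theorem laplacian_apply_green {𝕜 V : Type*} [RCLike 𝕜] [NormedAddCommGroup V]
    [InnerProductSpace 𝕜 V] {Δ G : V →ₗ[𝕜] V} [(ker Δ).HasOrthogonalProjection]
    (hGker : ∀ x ∈ ker Δ, G x = 0) (hΔG : ∀ x ∈ (ker Δ)ᗮ, Δ (G x) = x) (x : V) :
    Δ (G x) = x - (ker Δ).starProjection x := by
  have hGproj : G ((ker Δ).starProjection x) = 0 := hGker _ ((ker Δ).starProjection_apply_mem x)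
  rw [← hΔG _ ((ker Δ).sub_starProjection_mem_orthogonal x), map_sub, hGproj, sub_zero]

theorem stmt1_general {V : Type*} [NormedAddCommGroup V] [InnerProductSpace ℂ V]
    [FiniteDimensional ℂ V]
    (d : V →ₗ[ℂ] V)
    (hdstar2 : adjoint d ∘ₗ adjoint d = 0)
    (Δ : V →ₗ[ℂ] V) (hΔ : Δ = d ∘ₗ adjoint d + adjoint d ∘ₗ d)
    (G : V →ₗ[ℂ] V)
    (hGker : ∀ x ∈ ker Δ, G x = 0)
    (hGinv : ∀ x ∈ (ker Δ : Submodule ℂ V)ᗮ, Δ (G x) = x ∧ G (Δ x) = x)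
    (hGd : G ∘ₗ d = d ∘ₗ G) (hGdstar : G ∘ₗ adjoint d = adjoint d ∘ₗ G)
    (h : V →ₗ[ℂ] V) (hh : h = adjoint d ∘ₗ G) :
    (∀ y : ker Δ, Submodule.orthogonalProjection (ker Δ) ((y : V)) = y)
    ∧ (∀ x : V, d (h x) + h (d x) = x - (Submodule.orthogonalProjection (ker Δ) x : V))
    ∧ (∀ y : ker Δ, h (y : V) = 0)
    ∧ h ∘ₗ h = 0
    ∧ (∀ x : V, Submodule.orthogonalProjection (ker Δ) (h x) = 0) := by
  subst hh hΔ
  refine ⟨Submodule.orthogonalProjectionOnto_mem_subspace_eq_self, fun x => ?_,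
    fun y => by simp [hGker y y.2], ?_, fun x => ?_⟩
  · rw [← Submodule.starProjection_apply,
      ← laplacian_apply_green hGker (fun x hx => (hGinv x hx).1) x, comp_apply, comp_apply,
      ← comp_apply G d, hGd]
    rfl
  · rw [comp_assoc, ← comp_assoc G, hGdstar, comp_assoc, ← comp_assoc, hdstar2, zero_comp]
  · apply Submodule.orthogonalProjectionOnto_apply_of_mem_orthogonal
    exact adjoint_apply_mem_orthogonal_ker_laplacian d (G x)

/-- Hodge-theoretic transfer data.  `V` a complex inner product space,
`Δ = d d* + d* d` the Laplacian, `H = ker Δ` the harmonic subspace, `G` the Green's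
operator (zero on `H`, inverse of `Δ` on `Hᗮ`) commuting with `d` and `d*`, and
`h = d* G`.  Then `(ι, π, h)` (inclusion, orthogonal projection, homotopy) satisfy
`π ∘ ι = id`, `d h + h d = id − ι π`, and the side conditions `h ι = h² = π h = 0`. -/
theorem stmt1 {V : Type*} [NormedAddCommGroup V] [InnerProductSpace ℂ V]
    [FiniteDimensional ℂ V]
    (d : V →ₗ[ℂ] V) (hd2 : d ∘ₗ d = 0)
    (hdstar2 : adjoint d ∘ₗ adjoint d = 0)
    (Δ : V →ₗ[ℂ] V) (hΔ : Δ = d ∘ₗ adjoint d + adjoint d ∘ₗ d)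
    (G : V →ₗ[ℂ] V)
    (hGker : ∀ x ∈ ker Δ, G x = 0)
    (hGmem : ∀ x ∈ (ker Δ : Submodule ℂ V)ᗮ, G x ∈ (ker Δ : Submodule ℂ V)ᗮ)
    (hGinv : ∀ x ∈ (ker Δ : Submodule ℂ V)ᗮ, Δ (G x) = x ∧ G (Δ x) = x)
    (hGd : G ∘ₗ d = d ∘ₗ G) (hGdstar : G ∘ₗ adjoint d = adjoint d ∘ₗ G)
    (h : V →ₗ[ℂ] V) (hh : h = adjoint d ∘ₗ G) :
    (∀ y : ker Δ, Submodule.orthogonalProjection (ker Δ) ((y : V)) = y)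
    ∧ (∀ x : V, d (h x) + h (d x) = x - (Submodule.orthogonalProjection (ker Δ) x : V))
    ∧ (∀ y : ker Δ, h (y : V) = 0)
    ∧ h ∘ₗ h = 0
    ∧ (∀ x : V, Submodule.orthogonalProjection (ker Δ) (h x) = 0) :=
  stmt1_general d hdstar2 Δ hΔ G hGker hGinv hGd hGdstar h hh
end

section
/- Let n ≤ 4. Any k-ary higher homotopy operation (k ≥ 3, total degree ≥ −2k+5) with exactly one argument in the formal part (total degree ≥ n) and k−1 arguments in the primitive part of total degree ≥ 2 has output of total degree ≥ n + 3. Since the maximum possible total degree in H is 2n and a nonzero output requires degree ≤ 2n − ε for the relevant targets, and n + 3 > 2n − 2 for n < 5, all such operations vanish except possibly in top degree (n,n), where only the product is nonzero. -/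
theorem Finset.add_card_sub_one_nsmul_le_sum {ι M : Type*} [Fintype ι] [AddCommMonoid M]
    [PartialOrder M] [IsOrderedAddMonoid M] (d : ι → M) (i₀ : ι) {a b : M}
    (h₀ : a ≤ d i₀) (h : ∀ i, i ≠ i₀ → b ≤ d i) :
    a + (Fintype.card ι - 1) • b ≤ ∑ i, d i := by
  classical
  rw [← Finset.add_sum_erase _ _ (Finset.mem_univ i₀)]
  have hcard : (Finset.univ.erase i₀).card = Fintype.card ι - 1 := by
    rw [Finset.card_erase_of_mem (Finset.mem_univ i₀), Finset.card_univ]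
  refine add_le_add h₀ ?_
  rw [← hcard]
  exact Finset.card_nsmul_le_sum _ _ _ fun i hi => h i (Finset.ne_of_mem_erase hi)

theorem Fin.add_two_mul_sub_one_le_sum {k : ℕ} (d : Fin k → ℤ) (i₀ : Fin k) {n : ℤ}
    (h₀ : n ≤ d i₀) (h : ∀ i, i ≠ i₀ → 2 ≤ d i) :
    n + 2 * ((k : ℤ) - 1) ≤ ∑ i, d i := by
  have hsum := Finset.add_card_sub_one_nsmul_le_sum d i₀ h₀ h
  rw [Fintype.card_fin, nsmul_eq_mul, Nat.cast_pred i₀.pos] at hsum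
  linarith

theorem stmt9_general {W : Type*} [AddCommGroup W] [Module ℂ W]
    (n : ℤ) (hn : n ≤ 4) (H : ℤ → Submodule ℂ W)
    (hdisj : ∀ a b : ℤ, a ≠ b → ∀ w : W, w ∈ H a → w ∈ H b → w = 0)
    (k : ℕ) (D : ℤ) (hD : -2 * (k : ℤ) + 5 ≤ D)
    (f : (Fin k → W) → W)
    (hf : ∀ (d : Fin k → ℤ) (x : Fin k → W), (∀ i, x i ∈ H (d i)) →
      f x ∈ H ((∑ i, d i) + D))
    (d : Fin k → ℤ) (i₀ : Fin k) (hformal : n ≤ d i₀)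
    (hprim : ∀ i, i ≠ i₀ → 2 ≤ d i)
    (x : Fin k → W) (hx : ∀ i, x i ∈ H (d i))
    (m : ℤ) (hm : m ≤ 2 * n - 2) (hout : f x ∈ H m) :
    f x = 0 := by
  have hsum := Fin.add_two_mul_sub_one_le_sum d i₀ hformal hprim
  -- the output degree is at least `n + 3`, which exceeds `2n - 2` exactly when `n < 5`
  have hdeg : (∑ i, d i) + D ≠ m := by omega
  exact hdisj _ _ hdeg _ (hf d x hx) hout

/-- hypersurface footprint in dimension `n ≤ 4`.  A `k`-ary higher
homotopy operation (`k ≥ 3`, total degree `D ≥ -2k+5`) with exactly one argument in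
the formal part (total degree `≥ n`) and `k-1` primitive arguments of total degree
`≥ 2` has output of total degree `≥ n+3 > 2n-2`; hence its output cannot lie in any
component of degree `≤ 2n-2`, and all such operations vanish (except possibly in top
degree `(n,n)`, where only the product is nonzero). -/
theorem stmt9 {W : Type*} [AddCommGroup W] [Module ℂ W]
    (n : ℤ) (hn : n ≤ 4) (H : ℤ → Submodule ℂ W)
    (hdisj : ∀ a b : ℤ, a ≠ b → ∀ w : W, w ∈ H a → w ∈ H b → w = 0)
    (k : ℕ) (hk : 3 ≤ k) (D : ℤ) (hD : -2 * (k : ℤ) + 5 ≤ D)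
    (f : (Fin k → W) → W)
    (hf : ∀ (d : Fin k → ℤ) (x : Fin k → W), (∀ i, x i ∈ H (d i)) →
      f x ∈ H ((∑ i, d i) + D))
    (d : Fin k → ℤ) (i₀ : Fin k) (hformal : n ≤ d i₀)
    (hprim : ∀ i, i ≠ i₀ → 2 ≤ d i)
    (x : Fin k → W) (hx : ∀ i, x i ∈ H (d i))
    (m : ℤ) (hm : m ≤ 2 * n - 2) (hout : f x ∈ H m) :
    f x = 0 :=
  stmt9_general n hn H hdisj k D hD f hf d i₀ hformal hprim x hx m hm hout
end

section
/- Let (ι, π, h) be linear transfer data between a cochain complex B with unit element e and its cohomology H, satisfying the side conditions, with ι([e]) = e. Then in the transferred homotopy structure, every transferred operation corresponding to a tree with at least one internal edge vanishes whenever [e] is one of its arguments; the only nonvanishing operation with argument [e] is the binary product, which acts as the identity: [e]·x = x. -/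
/-!
Every node evaluates into the image of `h`, so `h` kills the value of every tree (`hι = h² = 0`)
and `π` kills the value of every node (`πh = 0`). A subtree containing the leaf `[e]` evaluates to
`ι[e] = 1` if it is that leaf and, by induction, to `0` otherwise: at a vertex with an input `0`
or `1`, the product returns `0` or the other input and the bracket returns `0`, and the map
applied next (`h` inside the tree, `π` at the root) kills the other input.
-/

/-- Rooted trees with leaves decorated by inputs from `H` and internal vertices
decorated either by the product (`isProd = true`) or the bracket of a BV-algebra. -/
inductive TTree (H : Type*) where
  | leaf (x : H) : TTree H
  | node (isProd : Bool) (l r : TTree H) : TTree H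

namespace TTree

def containsLeaf {H : Type*} : TTree H → H → Prop
  | leaf y, x => y = x
  | node _ l r, x => l.containsLeaf x ∨ r.containsLeaf x

def isNode {H : Type*} : TTree H → Prop
  | leaf _ => False
  | node _ _ _ => True

/-- Evaluation inside `B`: leaves decorated by `ι`, internal edges by `h`,
vertices by the product or bracket of `B`. -/
noncomputable def evalB {H B : Type*} [AddCommGroup H] [Module ℂ H]
    [Ring B] [Algebra ℂ B] (ι : H →ₗ[ℂ] B) (h : B →ₗ[ℂ] B)
    (br : B →ₗ[ℂ] B →ₗ[ℂ] B) : TTree H → B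
  | leaf x => ι x
  | node b l r =>
      h (if b then evalB ι h br l * evalB ι h br r
         else br (evalB ι h br l) (evalB ι h br r))

end TTree

namespace TTree

def vertexOp {R B : Type*} [CommSemiring R] [Semiring B] [Module R B]
    (br : B →ₗ[R] B →ₗ[R] B) (isProd : Bool) (x y : B) : B :=
  if isProd then x * y else br x y

section VertexOp

variable {R B M : Type*} [CommSemiring R] [Semiring B] [Module R B] [AddCommMonoid M]
  [Module R M] (br : B →ₗ[R] B →ₗ[R] B)

@[simp]
theorem vertexOp_zero_left (b : Bool) (y : B) : vertexOp br b 0 y = 0 := by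
  cases b <;> simp [vertexOp]

@[simp]
theorem vertexOp_zero_right (b : Bool) (x : B) : vertexOp br b x 0 = 0 := by
  cases b <;> simp [vertexOp]

theorem map_vertexOp_eq_zero_left {f : B →ₗ[R] M} (hbrl : ∀ y : B, br 1 y = 0) (b : Bool)
    {x y : B} (hx : x = 0 ∨ x = 1) (hy : f y = 0) : f (vertexOp br b x y) = 0 := by
  rcases hx with rfl | rfl
  · simp
  · cases b <;> simp [vertexOp, hbrl, hy]

theorem map_vertexOp_eq_zero_right {f : B →ₗ[R] M} (hbrr : ∀ x : B, br x 1 = 0) (b : Bool)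
    {x y : B} (hx : f x = 0) (hy : y = 0 ∨ y = 1) : f (vertexOp br b x y) = 0 := by
  rcases hy with rfl | rfl
  · simp
  · cases b <;> simp [vertexOp, hbrr, hx]

end VertexOp

section Eval

variable {H B : Type*} [AddCommGroup H] [Module ℂ H] [Ring B] [Algebra ℂ B]
  {ι : H →ₗ[ℂ] B} {h : B →ₗ[ℂ] B} {br : B →ₗ[ℂ] B →ₗ[ℂ] B}

theorem evalB_node (b : Bool) (l r : TTree H) :
    evalB ι h br (node b l r) = h (vertexOp br b (evalB ι h br l) (evalB ι h br r)) :=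
  rfl

theorem apply_evalB_eq_zero (hhι : h ∘ₗ ι = 0) (hhh : h ∘ₗ h = 0) :
    ∀ t : TTree H, h (evalB ι h br t) = 0
  | leaf x => LinearMap.congr_fun hhι x
  | node _ _ _ => LinearMap.congr_fun hhh _

theorem map_evalB_eq_zero_of_isNode {C : Type*} [AddCommMonoid C] [Module ℂ C]
    {π : B →ₗ[ℂ] C} (hπh : π ∘ₗ h = 0) :
    ∀ {t : TTree H}, t.isNode → π (evalB ι h br t) = 0
  | node _ _ _, _ => LinearMap.congr_fun hπh _

theorem evalB_eq_zero_or_one_of_containsLeaf {e : H} (he : ι e = 1) {t : TTree H}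
    (ht : t.containsLeaf e) (hnode : t.isNode → evalB ι h br t = 0) :
    evalB ι h br t = 0 ∨ evalB ι h br t = 1 := by
  cases t with
  | leaf y =>
    obtain rfl : y = e := ht
    exact Or.inr he
  | node => exact Or.inl (hnode trivial)

theorem evalB_eq_zero_of_containsLeaf (hhι : h ∘ₗ ι = 0) (hhh : h ∘ₗ h = 0)
    (hbrl : ∀ x : B, br 1 x = 0) (hbrr : ∀ x : B, br x 1 = 0) {e : H} (he : ι e = 1)
    {t : TTree H} (ht : t.containsLeaf e) (hnode : t.isNode) : evalB ι h br t = 0 := by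
  induction t with
  | leaf => exact hnode.elim
  | node b l r ihl ihr =>
    rw [evalB_node]
    rcases ht with hl | hr
    · exact map_vertexOp_eq_zero_left br hbrl b
        (evalB_eq_zero_or_one_of_containsLeaf he hl (ihl hl))
        (apply_evalB_eq_zero hhι hhh r)
    · exact map_vertexOp_eq_zero_right br hbrr b
        (apply_evalB_eq_zero hhι hhh l)
        (evalB_eq_zero_or_one_of_containsLeaf he hr (ihr hr))

end Eval

end TTree

/-- let `(ι, π, h)` be linear transfer data satisfying the side conditions
between a BV-algebra `B` with unit `e = 1` (bracket with `e` vanishes, product with `e` is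
the identity) and its cohomology `H`, with `ι([e]) = e`.  Then every transferred operation
whose tree has at least one internal edge vanishes whenever `[e] = π(1)` is one of its
arguments, and the only nonvanishing operation with argument `[e]` is the binary product,
which acts as the identity: `[e]·x = x`. -/
theorem stmt18 {H B : Type*} [AddCommGroup H] [Module ℂ H] [Ring B] [Algebra ℂ B]
    (ι : H →ₗ[ℂ] B) (π : B →ₗ[ℂ] H) (h : B →ₗ[ℂ] B)
    (hπι : π ∘ₗ ι = LinearMap.id)
    (hhι : h ∘ₗ ι = 0) (hhh : h ∘ₗ h = 0) (hπh : π ∘ₗ h = 0)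
    (br : B →ₗ[ℂ] B →ₗ[ℂ] B)
    (hbrl : ∀ x : B, br 1 x = 0) (hbrr : ∀ x : B, br x 1 = 0)
    (hπe : ι (π 1) = 1) :
    (∀ (b : Bool) (l r : TTree H), (l.isNode ∨ r.isNode) →
      (TTree.node b l r).containsLeaf (π 1) →
      π (if b then TTree.evalB ι h br l * TTree.evalB ι h br r
         else br (TTree.evalB ι h br l) (TTree.evalB ι h br r)) = 0)
    ∧ (∀ x : H, π (ι (π 1) * ι x) = x) := by
  have eval_eq_zero {t : TTree H} (ht : t.containsLeaf (π 1)) :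
      t.isNode → TTree.evalB ι h br t = 0 :=
    TTree.evalB_eq_zero_of_containsLeaf hhι hhh hbrl hbrr hπe ht
  refine ⟨fun b l r hnode hmem => ?_, fun x => ?_⟩
  · change π (TTree.vertexOp br b (TTree.evalB ι h br l) (TTree.evalB ι h br r)) = 0
    rcases hmem with hl | hr
    · rcases hnode with hln | hrn
      · rw [eval_eq_zero hl hln, TTree.vertexOp_zero_left, map_zero]
      · exact TTree.map_vertexOp_eq_zero_left br hbrl b
          (TTree.evalB_eq_zero_or_one_of_containsLeaf hπe hl (eval_eq_zero hl))
          (TTree.map_evalB_eq_zero_of_isNode hπh hrn)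
    · rcases hnode with hln | hrn
      · exact TTree.map_vertexOp_eq_zero_right br hbrr b
          (TTree.map_evalB_eq_zero_of_isNode hπh hln)
          (TTree.evalB_eq_zero_or_one_of_containsLeaf hπe hr (eval_eq_zero hr))
      · rw [eval_eq_zero hr hrn, TTree.vertexOp_zero_right, map_zero]
  · rw [hπe, one_mul]
    exact LinearMap.congr_fun hπι x
end
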